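/- arXiv:1701.06628 — 2 statements merged into one kernel-verified Lean document; each statement's English description precedes it below -/
import Mathlib

section
/- For every x ∈ ℝⁿ, R(x) = C ∩ ((x−f) − C), where C := {r ∈ ℝⁿ : (aᵢ − a_k)·r ≤ 0 for all i ∈ I} and k ∈ I is any index attaining ψ(x−f) = a_k·(x−f). -/
/-! Since `ψ r ≥ a k ⬝ r` and `ψ (x - f - r) ≥ a k ⬝ (x - f - r)`, and the right-hand sides add up
to `ψ (x - f)`, equality holds exactly when `a k` attains both maxima, i.e. when `r ∈ C` and
`x - f - r ∈ C`. -/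

namespace Finset

variable {α β : Type*} {s : Finset β}

theorem sup'_eq_iff_forall_le [SemilatticeSup α] (H : s.Nonempty) (f : β → α) {k : β}
    (hk : k ∈ s) : s.sup' H f = f k ↔ ∀ i ∈ s, f i ≤ f k :=
  ⟨fun h _ hi => h ▸ le_sup' f hi, fun h => le_antisymm ((sup'_le_iff H f).2 h) (le_sup' f hk)⟩

theorem sup'_add_sup'_eq_iff [SemilatticeSup α] [Add α] [AddLeftStrictMono α]
    [AddRightStrictMono α] (H : s.Nonempty) (p q : β → α) {k : β} (hk : k ∈ s) :
    s.sup' H p + s.sup' H q = p k + q k ↔ (∀ i ∈ s, p i ≤ p k) ∧ ∀ i ∈ s, q i ≤ q k := by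
  rw [eq_comm, add_eq_add_iff_eq_and_eq (le_sup' p hk) (le_sup' q hk), eq_comm,
    sup'_eq_iff_forall_le H p hk, eq_comm, sup'_eq_iff_forall_le H q hk]

end Finset

theorem stmt_5 {n : ℕ} {I : Type*} [Fintype I] [Nonempty I]
    (a : I → EuclideanSpace ℝ (Fin n)) (f : EuclideanSpace ℝ (Fin n))
    (ψ : EuclideanSpace ℝ (Fin n) → ℝ)
    (hψ : ∀ r, ψ r = Finset.univ.sup' Finset.univ_nonempty (fun i => (inner ℝ (a i) r : ℝ)))
    (x : EuclideanSpace ℝ (Fin n)) (k : I)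
    (hk : ψ (x - f) = (inner ℝ (a k) (x - f) : ℝ))
    (C : Set (EuclideanSpace ℝ (Fin n)))
    (hC : C = {r | ∀ i, (inner ℝ (a i - a k) r : ℝ) ≤ 0}) :
    {r : EuclideanSpace ℝ (Fin n) | ψ r + ψ (x - f - r) = ψ (x - f)} =
      C ∩ {r | x - f - r ∈ C} := by
  ext r
  have hsplit : ψ (x - f) = inner ℝ (a k) r + inner ℝ (a k) (x - f - r) := by
    rw [hk, ← inner_add_right, add_sub_cancel]
  simp only [Set.mem_ofPred_eq, Set.mem_inter_iff, hC, hsplit, hψ,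
    Finset.sup'_add_sup'_eq_iff _ _ _ (Finset.mem_univ k), Finset.mem_univ, true_imp_iff,
    inner_sub_left, sub_nonpos]
end

section
/- Let x ∈ ℝⁿ and suppose ψ(x−f) = 1 and ψ(r*) + ψ(x−f−r*) = 1 for some r* ∈ ℝⁿ. Then for λ := ψ(r*), the point (x, 1) lies in B(λ, r*), i.e., aᵢ·(x−f) + (ψ(r*) − aᵢ·r*) ≤ 1 for all i ∈ I. Conversely, if (x, 1) ∈ B(ψ(r*), r*) and ψ(x−f) ≥ 1, then ψ(r*) + ψ(x−f−r*) = ψ(x−f) = 1. -/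
/-!
Since `⟪aᵢ, x − f⟫ − ⟪aᵢ, r*⟫ = ⟪aᵢ, x − f − r*⟫`, the point `(x, 1)` lies in `B(λ, r*)` exactly
when `ψ(x − f − r*) + λ ≤ 1`. Together with subadditivity `ψ(x − f) ≤ ψ(r*) + ψ(x − f − r*)`,
both directions are then linear arithmetic.
-/

open Finset RealInnerProductSpace

section MaxInner

variable {E : Type*} [NormedAddCommGroup E] [InnerProductSpace ℝ E]
  {I : Type*} [Fintype I] [Nonempty I] (a : I → E)

noncomputable def maxInner (r : E) : ℝ :=
  univ.sup' univ_nonempty fun i => ⟪a i, r⟫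

theorem inner_le_maxInner (r : E) (i : I) : ⟪a i, r⟫ ≤ maxInner a r :=
  le_sup' (fun i => ⟪a i, r⟫) (mem_univ i)

theorem maxInner_le_iff {r : E} {c : ℝ} : maxInner a r ≤ c ↔ ∀ i, ⟪a i, r⟫ ≤ c := by
  simp [maxInner]

theorem maxInner_le_add_sub (d r : E) : maxInner a d ≤ maxInner a r + maxInner a (d - r) := by
  refine (maxInner_le_iff a).2 fun i => ?_
  calc ⟪a i, d⟫ = ⟪a i, r⟫ + ⟪a i, d - r⟫ := by rw [← inner_add_right, add_sub_cancel]
    _ ≤ maxInner a r + maxInner a (d - r) :=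
      add_le_add (inner_le_maxInner a r i) (inner_le_maxInner a (d - r) i)

theorem forall_inner_add_sub_le_one_iff (d r : E) (c : ℝ) :
    (∀ i, ⟪a i, d⟫ + (c - ⟪a i, r⟫) ≤ 1) ↔ maxInner a (d - r) + c ≤ 1 := by
  rw [← le_sub_iff_add_le, maxInner_le_iff]
  refine forall_congr' fun i => ?_
  rw [inner_sub_right]
  constructor <;> intro h <;> linarith

end MaxInner

theorem stmt_17 {n : ℕ} {I : Type*} [Fintype I] [Nonempty I]
    (a : I → EuclideanSpace ℝ (Fin n)) (f rstar : EuclideanSpace ℝ (Fin n))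
    (ψ : EuclideanSpace ℝ (Fin n) → ℝ)
    (hψ : ∀ r, ψ r = Finset.univ.sup' Finset.univ_nonempty (fun i => (inner ℝ (a i) r : ℝ)))
    (x : EuclideanSpace ℝ (Fin n)) :
    ((ψ (x - f) = 1 ∧ ψ rstar + ψ (x - f - rstar) = 1) →
      ∀ i, (inner ℝ (a i) (x - f) : ℝ) + (ψ rstar - (inner ℝ (a i) rstar : ℝ)) ≤ 1) ∧
    (((∀ i, (inner ℝ (a i) (x - f) : ℝ) + (ψ rstar - (inner ℝ (a i) rstar : ℝ)) ≤ 1) ∧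
        1 ≤ ψ (x - f)) →
      ψ rstar + ψ (x - f - rstar) = ψ (x - f) ∧ ψ (x - f) = 1) := by
  obtain rfl : ψ = maxInner a := funext hψ
  rw [forall_inner_add_sub_le_one_iff]
  have hsub := maxInner_le_add_sub a (x - f) rstar
  constructor
  · rintro ⟨-, h⟩
    linarith
  · rintro ⟨hB, h⟩
    constructor <;> linarith
end
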